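/- Let Ω be an open subset of ℝⁿ and let f : ℝⁿ → ℝ be continuous on Ω and differentiable at H^k-almost every point of Ω, where k is a nonnegative integer with k < n. Then for every point x ∈ Ω at which f is differentiable, ‖∇f(x)‖ is at most the essential supremum of ‖∇f‖ over Ω with respect to Lebesgue measure on ℝⁿ. -/

import Mathlib

/-!
The set `N` of non-differentiability points in `Ω` is `H^k`-null, hence `H^(n-1)`-null. Fix a
unit vector `v` and identify `ℝⁿ` with `ℝ^(n-1) × ℝ` by a measure-preserving linear map sending
`(0, 1)` to `v`. The image of `N` under the (Lipschitz) projection to `ℝ^(n-1)` is Lebesgue-null,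
so by Fubini almost every line parallel to `v` misses `N` and meets `{‖∇f‖ > C}` in a null set,
where `C` is the essential supremum. Along such a line `f` is differentiable everywhere, so the
fundamental theorem of calculus shows that `f` is `C`-Lipschitz on it. These lines accumulate at
every point, and continuity of `f` carries the bound to the line through `x`, whence
`|∇f(x) v| ≤ C`.
-/

open MeasureTheory ENNReal NNReal
open Filter Topology Set Metric Module

theorem nhds_inf_ae_neBot {X : Type*} [TopologicalSpace X] [MeasurableSpace X] (μ : Measure X)
    [μ.IsOpenPosMeasure] (x : X) : (𝓝 x ⊓ ae μ).NeBot := by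
  refine inf_neBot_iff.2 fun U hU V hV => ?_
  by_contra h
  exact (Measure.measure_pos_of_mem_nhds μ hU).ne'
    (measure_mono_null (fun y hy hyV => h ⟨y, hy, hyV⟩) hV)

theorem hausdorffMeasure_eq_zero_of_le {X : Type*} [EMetricSpace X] [MeasurableSpace X]
    [BorelSpace X] {d₁ d₂ : ℝ} (h : d₁ ≤ d₂) {s : Set X} (hs : μH[d₁] s = 0) : μH[d₂] s = 0 := by
  rcases h.eq_or_lt with rfl | h
  · exact hs
  · exact (Measure.hausdorffMeasure_zero_or_top h s).resolve_right (by simp [hs])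

section Calculus

variable {E F : Type*} [NormedAddCommGroup E] [NormedSpace ℝ E] [NormedAddCommGroup F]
  [NormedSpace ℝ F]

theorem norm_sub_le_of_ae_norm_deriv_le [CompleteSpace F] {g : ℝ → F} {a b C : ℝ} (hab : a ≤ b)
    (hg : ∀ c ∈ Icc a b, DifferentiableAt ℝ g c) (hC : ∀ᵐ c, c ∈ Ioc a b → ‖deriv g c‖ ≤ C) :
    ‖g b - g a‖ ≤ C * (b - a) := by
  have hint : IntervalIntegrable (deriv g) volume a b :=
    (intervalIntegrable_iff_integrableOn_Ioc_of_le hab).2 <|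
      Integrable.mono' (integrableOn_const measure_Ioc_lt_top.ne) (aestronglyMeasurable_deriv g _)
        ((ae_restrict_iff' measurableSet_Ioc).2 hC)
  rw [← intervalIntegral.integral_eq_sub_of_hasDerivAt
    (fun c hc => (hg c (by rwa [uIcc_of_le hab] at hc)).hasDerivAt) hint]
  exact (intervalIntegral.norm_integral_le_of_norm_le_const_ae (by rwa [uIoc_of_le hab])).trans_eq
    (by rw [abs_of_nonneg (sub_nonneg.2 hab)])

theorem norm_sub_le_of_ae_norm_fderiv_le_on_segment [CompleteSpace F] {f : E → F} {y v : E}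
    {t C : ℝ} (ht : 0 ≤ t) (hd : ∀ s ∈ Icc 0 t, DifferentiableAt ℝ f (y + s • v))
    (hC : ∀ᵐ s, s ∈ Ioc 0 t → ‖fderiv ℝ f (y + s • v)‖ ≤ C) :
    ‖f (y + t • v) - f y‖ ≤ C * ‖v‖ * t := by
  have hderiv : ∀ s ∈ Icc 0 t,
      HasDerivAt (fun s : ℝ => f (y + s • v)) (fderiv ℝ f (y + s • v) v) s := fun s hs =>
    (hd s hs).hasFDerivAt.comp_hasDerivAt s
      (by simpa using ((hasDerivAt_id s).smul_const v).const_add y)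
  have := norm_sub_le_of_ae_norm_deriv_le (g := fun s => f (y + s • v)) (C := C * ‖v‖) ht
    (fun s hs => (hderiv s hs).differentiableAt) ?_
  · simpa using this
  filter_upwards [hC] with s hs hst
  rw [(hderiv s (Ioc_subset_Icc_self hst)).deriv]
  exact (fderiv ℝ f _).le_of_opNorm_le (hs hst) v

theorem norm_fderiv_apply_le_of_norm_sub_le {f : E → F} {x v : E} {C : ℝ}
    (hf : DifferentiableAt ℝ f x) (hC : ∀ᶠ t in 𝓝[>] 0, ‖f (x + t • v) - f x‖ ≤ C * t) :
    ‖fderiv ℝ f x v‖ ≤ C := by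
  refine le_of_tendsto (hf.hasFDerivAt.hasLineDerivAt v).tendsto_slope_zero_right.norm ?_
  filter_upwards [hC, self_mem_nhdsWithin] with t ht (htpos : 0 < t)
  rw [norm_smul, norm_inv, Real.norm_of_nonneg htpos.le]
  exact (inv_mul_le_iff₀ htpos).2 (by linarith)

end Calculus

section Lines

variable {E : Type*} [NormedAddCommGroup E] [NormedSpace ℝ E] [MeasurableSpace E] [BorelSpace E]

theorem ae_forall_add_apply_notMem {m : ℕ} {Ψ : (Fin m → ℝ) × ℝ → E}
    {π : E →L[ℝ] (Fin m → ℝ)} (hπΨ : ∀ p, π (Ψ p) = p.1) {N : Set E} (hN : μH[m] N = 0)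
    (x : E) : ∀ᵐ w, ∀ s, x + Ψ (w, s) ∉ N := by
  have hlip : LipschitzWith ‖π‖₊ fun z => π (z - x) := by
    have := π.lipschitz.comp (IsometryEquiv.subRight x).isometry.lipschitz
    rwa [mul_one] at this
  have hnull : volume ((fun z => π (z - x)) '' N) = 0 := by
    have := hlip.hausdorffMeasure_image_le (Nat.cast_nonneg m) N
    rw [hN, mul_zero, nonpos_iff_eq_zero] at this
    rwa [← hausdorffMeasure_pi_real, Fintype.card_fin]
  filter_upwards [measure_eq_zero_iff_ae_notMem.1 hnull] with w hw s hs
  exact hw ⟨_, hs, by simp [hπΨ]⟩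

end Lines

section InnerProductSpace

variable {E F : Type*} [NormedAddCommGroup E] [InnerProductSpace ℝ E] [FiniteDimensional ℝ E]

theorem exists_orthonormalBasis_apply_zero {m : ℕ} (hE : finrank ℝ E = m + 1) {v : E}
    (hv : ‖v‖ = 1) : ∃ b : OrthonormalBasis (Fin (m + 1)) ℝ E, b 0 = v := by
  have hv' : Orthonormal ℝ (({0} : Set (Fin (m + 1))).domRestrict fun _ => v) :=
    orthonormal_subsingleton_iff.2 fun _ => hv
  obtain ⟨b, hb⟩ := hv'.exists_orthonormalBasis_extension_of_card_eq (by simpa using hE)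
  exact ⟨b, hb 0 rfl⟩

variable [MeasurableSpace E] [BorelSpace E]

theorem exists_measurePreserving_prod_of_norm_eq_one {m : ℕ} (hE : finrank ℝ E = m + 1) {v : E}
    (hv : ‖v‖ = 1) :
    ∃ (Ψ : ((Fin m → ℝ) × ℝ) →L[ℝ] E) (π : E →L[ℝ] (Fin m → ℝ)),
      MeasurePreserving Ψ ∧ Ψ (0, 1) = v ∧ ∀ p, π (Ψ p) = p.1 := by
  obtain ⟨b, hb⟩ := exists_orthonormalBasis_apply_zero hE hv
  let cons : ((Fin m → ℝ) × ℝ) →L[ℝ] (Fin (m + 1) → ℝ) :=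
    ContinuousLinearMap.pi (Fin.cons (ContinuousLinearMap.snd ℝ _ ℝ)
      fun j => (ContinuousLinearMap.proj j).comp (ContinuousLinearMap.fst ℝ _ ℝ))
  have hcons : ∀ p, cons p = Fin.cons p.2 p.1 := fun p => by
    ext i; refine Fin.cases ?_ (fun j => ?_) i <;> simp [cons]
  refine ⟨b.repr.symm.toContinuousLinearEquiv.toContinuousLinearMap ∘L
      (EuclideanSpace.equiv (Fin (m + 1)) ℝ).symm.toContinuousLinearMap ∘L cons,
    ContinuousLinearMap.pi (fun j => ContinuousLinearMap.proj j.succ) ∘L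
      (EuclideanSpace.equiv (Fin (m + 1)) ℝ).toContinuousLinearMap ∘L
      b.repr.toContinuousLinearEquiv.toContinuousLinearMap, ?_, ?_, fun p => ?_⟩
  · have hcons_mp : MeasurePreserving cons := by
      convert (volume_preserving_piFinSuccAbove (fun _ : Fin (m + 1) => ℝ) 0).symm.comp
        (Measure.measurePreserving_swap (μ := volume) (ν := volume))
      · ext p : 1
        simp only [hcons, MeasurableEquiv.piFinSuccAbove_symm_apply, Fin.insertNthEquiv_zero,
          Function.comp_apply]
        rfl
      · exact (Measure.volume_eq_prod _ _).symm
    exact b.measurePreserving_repr_symm.comp ((PiLp.volume_preserving_toLp _).comp hcons_mp)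
  · rw [← hb]
    change b.repr.symm (WithLp.toLp 2 (cons (0, 1))) = b 0
    rw [LinearIsometryEquiv.symm_apply_eq, b.repr_self]
    ext i; refine Fin.cases ?_ (fun j => ?_) i <;> simp [hcons, Fin.succ_ne_zero]
  · ext j; simp [hcons]

variable [NormedAddCommGroup F] [NormedSpace ℝ F] [CompleteSpace F]

theorem norm_sub_le_of_ae_norm_fderiv_le {m : ℕ} (hE : finrank ℝ E = m + 1) {Ω : Set E}
    (hΩ : IsOpen Ω) {f : E → F} (hf : ContinuousOn f Ω)
    (hN : μH[m] {y | y ∈ Ω ∧ ¬DifferentiableAt ℝ f y} = 0) {C : ℝ}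
    (hC : ∀ᵐ y ∂volume.restrict Ω, ‖fderiv ℝ f y‖ ≤ C) {x v : E} (hv : ‖v‖ = 1) {R t : ℝ}
    (hR : ball x R ⊆ Ω) (ht : 0 ≤ t) (htR : t < R) : ‖f (x + t • v) - f x‖ ≤ C * t := by
  obtain ⟨Ψ, π, hΨ, hΨv, hπΨ⟩ := exists_measurePreserving_prod_of_norm_eq_one hE hv
  set y : (Fin m → ℝ) → E := fun w => x + Ψ (w, 0) with hy
  have hline : ∀ w (s : ℝ), x + Ψ (w, s) = y w + s • v := fun w s => by
    rw [hy, add_assoc, ← hΨv, ← ContinuousLinearMap.map_smul, ← map_add]; simp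
  have h_bound : ∀ᵐ w, ∀ᵐ s : ℝ, y w + s • v ∈ Ω → ‖fderiv ℝ f (y w + s • v)‖ ≤ C := by
    have := ((measurePreserving_add_left volume x).comp hΨ).quasiMeasurePreserving.ae
      ((ae_restrict_iff' hΩ.measurableSet).1 hC)
    rw [Measure.volume_eq_prod] at this
    simpa [hline] using Measure.ae_ae_of_ae_prod this
  have h_diff : ∀ᵐ w, ∀ s : ℝ, y w + s • v ∈ Ω → DifferentiableAt ℝ f (y w + s • v) := by
    filter_upwards [ae_forall_add_apply_notMem hπΨ hN x] with w hw s hs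
    by_contra hnd
    exact hw s (hline w s ▸ ⟨hs, hnd⟩)
  have hy0 : Tendsto y (𝓝 0) (𝓝 x) :=
    Continuous.tendsto' (by fun_prop) 0 x (by simp [hy, Prod.mk_zero_zero])
  have h_near : ∀ᶠ w in 𝓝 0, ∀ s ∈ Icc 0 t, y w + s • v ∈ Ω := by
    filter_upwards [hy0 (ball_mem_nhds x (sub_pos.2 htR))] with w hw s hs
    refine hR (lt_of_le_of_lt (dist_triangle _ (y w) x) ?_)
    rw [dist_self_add_left, norm_smul, hv, mul_one, Real.norm_of_nonneg hs.1]
    linarith [mem_ball.1 hw, hs.2]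
  have h_good : ∀ᶠ w in 𝓝 0 ⊓ ae volume, ‖f (y w + t • v) - f (y w)‖ ≤ C * t := by
    filter_upwards [h_near.filter_mono inf_le_left, h_bound.filter_mono inf_le_right,
      h_diff.filter_mono inf_le_right] with w hΩw hb hd
    have hb' : ∀ᵐ s, s ∈ Ioc 0 t → ‖fderiv ℝ f (y w + s • v)‖ ≤ C := by
      filter_upwards [hb] with s hs hst using hs (hΩw s (Ioc_subset_Icc_self hst))
    simpa [hv] using
      norm_sub_le_of_ae_norm_fderiv_le_on_segment ht (fun s hs => hd s (hΩw s hs)) hb'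
  have h_cont : Tendsto (fun w => ‖f (y w + t • v) - f (y w)‖) (𝓝 0)
      (𝓝 ‖f (x + t • v) - f x‖) := by
    have hfx : ContinuousAt f x :=
      hf.continuousAt (hΩ.mem_nhds (hR (mem_ball_self (ht.trans_lt htR))))
    have hfxt : ContinuousAt f (x + t • v) :=
      hf.continuousAt (hΩ.mem_nhds (hR (by simp [norm_smul, hv, abs_of_nonneg ht, htR])))
    exact ((hfxt.tendsto.comp (hy0.add_const _)).sub (hfx.tendsto.comp hy0)).norm
  have := nhds_inf_ae_neBot (volume : Measure (Fin m → ℝ)) 0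
  exact le_of_tendsto (h_cont.mono_left inf_le_left) h_good

theorem nnnorm_fderiv_le_of_ae_nnnorm_fderiv_le {m : ℕ} (hE : finrank ℝ E = m + 1) {Ω : Set E}
    (hΩ : IsOpen Ω) {f : E → F} (hf : ContinuousOn f Ω)
    (hN : μH[m] {y | y ∈ Ω ∧ ¬DifferentiableAt ℝ f y} = 0) {C : ℝ≥0}
    (hC : ∀ᵐ y ∂volume.restrict Ω, ‖fderiv ℝ f y‖₊ ≤ C) {x : E} (hx : x ∈ Ω)
    (hfx : DifferentiableAt ℝ f x) : ‖fderiv ℝ f x‖₊ ≤ C := by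
  obtain ⟨R, hR0, hR⟩ := Metric.isOpen_iff.1 hΩ x hx
  refine ContinuousLinearMap.opNNNorm_le_of_unit_nnnorm fun v hv => ?_
  have hv' : ‖v‖ = 1 := congrArg NNReal.toReal hv
  suffices ‖fderiv ℝ f x v‖ ≤ C by exact_mod_cast this
  refine norm_fderiv_apply_le_of_norm_sub_le hfx ?_
  filter_upwards [Ioo_mem_nhdsGT hR0] with t ht
  exact norm_sub_le_of_ae_norm_fderiv_le hE hΩ hf hN (hC.mono fun y hy => by exact_mod_cast hy)
    hv' hR ht.1.le ht.2

end InnerProductSpace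

/-- Pointwise bound (key step of the main theorem): if `f : ℝⁿ → ℝ` is continuous on an open set
`Ω` and differentiable at `H^k`-a.e. point of `Ω` for a nonnegative integer `k < n`, then at
every point `x ∈ Ω` of differentiability, `‖∇f(x)‖` is at most the essential supremum of `‖∇f‖`
over `Ω` with respect to Lebesgue measure. -/
theorem stmt_14 {n k : ℕ} (hk : k < n)
    (Ω : Set (EuclideanSpace ℝ (Fin n))) (hΩ : IsOpen Ω)
    (f : EuclideanSpace ℝ (Fin n) → ℝ) (hf : ContinuousOn f Ω)
    (hdiff : ∀ᵐ x ∂((μH[(k : ℝ)] : Measure (EuclideanSpace ℝ (Fin n))).restrict Ω),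
      DifferentiableAt ℝ f x) :
    ∀ x ∈ Ω, DifferentiableAt ℝ f x →
      (‖fderiv ℝ f x‖₊ : ℝ≥0∞) ≤
        essSup (fun y => (‖fderiv ℝ f y‖₊ : ℝ≥0∞)) (volume.restrict Ω) := by
  intro x hx hfx
  obtain ⟨m, rfl⟩ : ∃ m, n = m + 1 := ⟨n - 1, by omega⟩
  have hN : μH[m] {y | y ∈ Ω ∧ ¬DifferentiableAt ℝ f y} = 0 := by
    refine hausdorffMeasure_eq_zero_of_le (by exact_mod_cast Nat.le_of_lt_succ hk : (k : ℝ) ≤ m) ?_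
    refine measure_eq_zero_iff_ae_notMem.2 (((ae_restrict_iff' hΩ.measurableSet).1 hdiff).mono ?_)
    exact fun y hy hyN => hyN.2 (hy hyN.1)
  have hle := ae_le_essSup (μ := volume.restrict Ω) fun y => (‖fderiv ℝ f y‖₊ : ℝ≥0∞)
  obtain hL | ⟨C, hC⟩ := (eq_or_ne (essSup (fun y => (‖fderiv ℝ f y‖₊ : ℝ≥0∞))
    (volume.restrict Ω)) ⊤).imp_right WithTop.ne_top_iff_exists.1
  · exact hL ▸ le_top
  rw [← hC] at hle ⊢
  exact ENNReal.coe_le_coe.2 (nnnorm_fderiv_le_of_ae_nnnorm_fderiv_le (by simp) hΩ hf hN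
    (hle.mono fun y hy => ENNReal.coe_le_coe.1 hy) hx hfx)
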